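/- arXiv:2307.10647 — 2 statements merged into one kernel-verified Lean document; each statement's English description precedes it below -/
import Mathlib

section
/- Let X be a real Banach space with dim(X) ≥ 2 and let x ∈ B_X. For every continuous linear functional x* on X with ‖x*‖ ≥ 1, the rank-one operator T = x* ⊗ x (defined by T(y) = x*(y)·x) satisfies ‖Id + T‖ ≥ (Dc(x) − 1)·‖x*‖ + 1, where Id is the identity operator on X and the norm is the operator norm. -/
open Set Metric Filter

variable {X : Type*} [NormedAddCommGroup X] [NormedSpace ℝ X]

/-- The slice `S(f, δ)` of the closed unit ball of `X`, determined by a norm-one functional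
`f` and `δ > 0` (the norm and positivity conditions are imposed at use sites). -/
def unitBallSlice (f : X →L[ℝ] ℝ) (δ : ℝ) : Set X :=
  {y | ‖y‖ ≤ 1 ∧ 1 - δ < f y}

/-- The Daugavet constant of a point: the infimum over all slices of the unit ball of the
supremum of distances from `x` to points of the slice. -/
noncomputable def Dc (x : X) : ℝ :=
  sInf {r | ∃ (f : X →L[ℝ] ℝ) (δ : ℝ), ‖f‖ = 1 ∧ 0 < δ ∧
    r = sSup ((fun y => ‖x - y‖) '' unitBallSlice f δ)}

/-- The Δ-constant of a point: the infimum over all slices of the unit ball containing `x`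
of the supremum of distances from `x` to points of the slice. -/
noncomputable def DeltaC (x : X) : ℝ :=
  sInf {r | ∃ (f : X →L[ℝ] ℝ) (δ : ℝ), ‖f‖ = 1 ∧ 0 < δ ∧ x ∈ unitBallSlice f δ ∧
    r = sSup ((fun y => ‖x - y‖) '' unitBallSlice f δ)}

/-- Any slice whose defining functional has norm one is nonempty. -/
lemma unitBallSlice_nonempty (g : X →L[ℝ] ℝ) (hg : ‖g‖ = 1) {δ : ℝ} (hδ : 0 < δ) :
    (unitBallSlice g δ).Nonempty := by
  rcases lt_or_ge 1 δ with h | h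
  · exact ⟨0, by simp [unitBallSlice], by simp [unitBallSlice]; linarith⟩
  · have h1 : 1 - δ < ‖g‖ := by rw [hg]; linarith
    obtain ⟨y, hy1, hy2⟩ := g.exists_lt_apply_of_lt_opNorm h1
    rcases le_or_gt 0 (g y) with hs | hs
    · refine ⟨y, hy1.le, ?_⟩
      rwa [Real.norm_eq_abs, abs_of_nonneg hs] at hy2
    · refine ⟨-y, by simpa using hy1.le, ?_⟩
      rw [map_neg]
      rwa [Real.norm_eq_abs, abs_of_neg hs] at hy2
/-- The distance image of a slice is bounded above by `2` when `‖x‖ ≤ 1`. -/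
lemma unitBallSlice_dist_bddAbove (x : X) (hx : ‖x‖ ≤ 1) (g : X →L[ℝ] ℝ) (δ : ℝ) :
    ∀ b ∈ (fun y => ‖x - y‖) '' unitBallSlice g δ, b ≤ 2 := by
  rintro b ⟨y, ⟨hy1, _⟩, rfl⟩
  calc ‖x - y‖ ≤ ‖x‖ + ‖y‖ := norm_sub_le x y
  _ ≤ 2 := by linarith

/-- `Dc x` is at most the sup of distances over any norm-one slice. -/
lemma Dc_le_sSup (x : X) (hx : ‖x‖ ≤ 1) (g : X →L[ℝ] ℝ) (hg : ‖g‖ = 1) {δ : ℝ}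
    (hδ : 0 < δ) : Dc x ≤ sSup ((fun y => ‖x - y‖) '' unitBallSlice g δ) := by
  apply csInf_le
  · refine ⟨0, ?_⟩
    rintro r ⟨f', δ', hf', hδ', rfl⟩
    obtain ⟨y0, hy0⟩ := unitBallSlice_nonempty f' hf' hδ'
    have h1 : (0:ℝ) ≤ ‖x - y0‖ := norm_nonneg _
    have h2 : ‖x - y0‖ ≤ sSup ((fun y => ‖x - y‖) '' unitBallSlice f' δ') :=
      le_csSup ⟨2, unitBallSlice_dist_bddAbove x hx f' δ'⟩ ⟨y0, hy0, rfl⟩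
    linarith
  · exact ⟨g, δ, hg, hδ, rfl⟩

set_option maxHeartbeats 1000000 in
/-- For every rank-one operator `T = x* ⊗ x` with `‖x*‖ ≥ 1`,
`‖Id + T‖ ≥ (Dc(x) − 1)·‖x*‖ + 1`. -/
theorem norm_id_add_rankOne_ge [CompleteSpace X] (hdim : 2 ≤ Module.rank ℝ X)
    (x : X) (hx : ‖x‖ ≤ 1) (f : X →L[ℝ] ℝ) (hf : 1 ≤ ‖f‖) :
    (Dc x - 1) * ‖f‖ + 1 ≤ ‖ContinuousLinearMap.id ℝ X + f.smulRight x‖ := by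
  set T := ContinuousLinearMap.id ℝ X + f.smulRight x with hTdef
  have hfpos : (0:ℝ) < ‖f‖ := lt_of_lt_of_le one_pos hf
  rcases le_or_gt (Dc x) 1 with hD | hD
  · -- degenerate case: LHS ≤ 1 ≤ ‖T‖, using a unit vector in the kernel of f
    have h1 : (Dc x - 1) * ‖f‖ + 1 ≤ 1 := by nlinarith
    refine h1.trans ?_
    obtain ⟨z, hz0, hz⟩ : ∃ z : X, z ≠ 0 ∧ f z = 0 := by
      by_contra h
      push_neg at h
      have hinj : Function.Injective (f : X →ₗ[ℝ] ℝ) := by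
        rw [← LinearMap.ker_eq_bot, LinearMap.ker_eq_bot']
        intro m hm
        by_contra hm0
        exact (h m hm0) hm
      have hle := LinearMap.lift_rank_le_of_injective (f : X →ₗ[ℝ] ℝ) hinj
      rw [Module.rank_self, Cardinal.lift_one] at hle
      simp at hle
      have h2 : Cardinal.lift.{0} (2 : Cardinal) ≤ Cardinal.lift.{0} (Module.rank ℝ X) :=
        Cardinal.lift_le.mpr hdim
      simp at h2
      have := h2.trans hle
      norm_num at this
    set y := ‖z‖⁻¹ • z with hy
    have hzn : ‖z‖ ≠ 0 := norm_ne_zero_iff.mpr hz0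
    have hyn : ‖y‖ = 1 := by
      rw [hy, norm_smul, norm_inv, norm_norm, inv_mul_cancel₀ hzn]
    have hfy : f y = 0 := by simp [hy, hz]
    have hTy : T y = y := by
      simp [hTdef, ContinuousLinearMap.add_apply, ContinuousLinearMap.smulRight_apply, hfy]
    calc (1:ℝ) = ‖T y‖ := by rw [hTy, hyn]
    _ ≤ ‖T‖ := T.unit_le_opNorm y hyn.le
  · refine le_of_forall_pos_le_add ?_
    intro ε hε
    set D := Dc x with hDdef
    have hD2 : (0:ℝ) < D + 2 := by linarith
    set t : ℝ := min (min (ε / (‖f‖ * (D + 2))) (D - 1)) (1/2) with htdef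
    have ht0 : 0 < t := by
      refine lt_min (lt_min ?_ (by linarith)) (by norm_num)
      positivity
    have htD : t ≤ D - 1 := le_trans (min_le_left _ _) (min_le_right _ _)
    have hthalf : t ≤ 1/2 := min_le_right _ _
    have htε : t * (‖f‖ * (D + 2)) ≤ ε := by
      have h1 : t ≤ ε / (‖f‖ * (D + 2)) := le_trans (min_le_left _ _) (min_le_left _ _)
      have h2 : (0:ℝ) < ‖f‖ * (D + 2) := by positivity
      calc t * (‖f‖ * (D + 2)) ≤ (ε / (‖f‖ * (D + 2))) * (‖f‖ * (D + 2)) := by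
            exact mul_le_mul_of_nonneg_right h1 h2.le
      _ = ε := div_mul_cancel₀ ε h2.ne'
    -- the norm-one functional
    set g : X →L[ℝ] ℝ := ‖f‖⁻¹ • (-f) with hgdef
    have hg : ‖g‖ = 1 := by
      have hns := norm_smul (‖f‖⁻¹) (-f)
      rw [hgdef, hns, norm_inv, norm_norm, norm_neg, inv_mul_cancel₀ hfpos.ne']
    set r := sSup ((fun y => ‖x - y‖) '' unitBallSlice g t) with hrdef
    have hDr : D ≤ r := Dc_le_sSup x hx g hg ht0
    obtain ⟨b, ⟨y, hymem, rfl⟩, hby⟩ :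
        ∃ b ∈ (fun y => ‖x - y‖) '' unitBallSlice g t, r - t < b := by
      apply exists_lt_of_lt_csSup
      · exact (unitBallSlice_nonempty g hg ht0).image _
      · linarith
    obtain ⟨hy1, hy2⟩ := hymem
    have hm : 1 ≤ ‖x - y‖ := by linarith
    have hm' : D - t < ‖x - y‖ := by linarith
    -- a = -(f y)
    set a : ℝ := -(f y) with hadef
    have hga : a = ‖f‖ * g y := by
      have : g y = ‖f‖⁻¹ * (-(f y)) := by
        simp [hgdef, ContinuousLinearMap.smul_apply]
      rw [hadef, this, ← mul_assoc, mul_inv_cancel₀ hfpos.ne', one_mul]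
    have ha : (1 - t) * ‖f‖ < a := by
      rw [hga]
      nlinarith [hy2, hfpos]
    have ht1 : t < 1 := by linarith [hthalf]
    have hapos : 0 < a := by
      have h1 : (0:ℝ) < (1 - t) * ‖f‖ := mul_pos (by linarith) hfpos
      linarith
    -- key norm computation
    have hTy : T (-y) = a • x - y := by
      simp [hTdef, hadef, ContinuousLinearMap.add_apply, ContinuousLinearMap.smulRight_apply,
        sub_eq_add_neg, add_comm, neg_smul]
    have hkey : a * ‖x - y‖ - |a - 1| ≤ ‖a • x - y‖ := by
      have hdecomp : a • x - y = a • (x - y) + (a - 1) • y := by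
        rw [smul_sub, sub_smul, one_smul]; abel
      rw [hdecomp]
      have h1 : ‖a • (x - y)‖ - ‖(a - 1) • y‖ ≤ ‖a • (x - y) + (a - 1) • y‖ := by
        have := norm_le_add_norm_add (a • (x - y)) ((a - 1) • y)
        linarith
      have h2 : ‖a • (x - y)‖ = a * ‖x - y‖ := by
        rw [norm_smul, Real.norm_eq_abs, abs_of_pos hapos]
      have h3 : ‖(a - 1) • y‖ ≤ |a - 1| := by
        rw [norm_smul, Real.norm_eq_abs]
        nlinarith [abs_nonneg (a - 1)]
      linarith
    have habs : |a - 1| ≤ a - 1 + 2 * t * ‖f‖ := by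
      rcases le_or_gt 1 a with h | h
      · rw [abs_of_nonneg (by linarith)]; nlinarith
      · rw [abs_of_neg (by linarith)]; nlinarith
    have hchain : (1 - t) * ‖f‖ * (D - t - 1) + 1 - 2 * t * ‖f‖ ≤ ‖T (-y)‖ := by
      rw [hTy]
      have e1 : a * (‖x - y‖ - 1) + 1 - 2 * t * ‖f‖ ≤ ‖a • x - y‖ := by
        have := hkey
        nlinarith [habs]
      have e2 : (1 - t) * ‖f‖ * (D - t - 1) ≤ a * (‖x - y‖ - 1) := by
        have h1 : (0:ℝ) ≤ ‖x - y‖ - 1 := by linarith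
        have h2 : (0:ℝ) < (1 - t) * ‖f‖ := by nlinarith
        have h3 : D - t - 1 ≤ ‖x - y‖ - 1 := by linarith
        have h4 : (0:ℝ) ≤ D - t - 1 := by linarith
        nlinarith
      linarith
    have hTop : ‖T (-y)‖ ≤ ‖T‖ := T.unit_le_opNorm (-y) (by simpa using hy1)
    have hfinal : (D - 1) * ‖f‖ + 1 ≤ (1 - t) * ‖f‖ * (D - t - 1) + 1 - 2 * t * ‖f‖ + ε := by
      nlinarith [htε, ht0.le, hfpos.le]
    linarith
end

section
/- Let X be a real Banach space and x ∈ B_X. Then Δc_X(x) = Δc_{X**}(J(x)), where J : X → X** is the canonical isometric embedding of X into its bidual; i.e., the Δ-constant of x computed in X equals the Δ-constant of J(x) computed in the bidual X**. -/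
open Set Metric Filter

variable {X : Type*} [NormedAddCommGroup X] [NormedSpace ℝ X]

/-!
A slice `S(f, δ)` of `B_X` containing `x` gives the weak-star slice `S(Jf, δ)` of `B_{X**}`
containing `J x`, and by Goldstine's theorem, in the finite-dimensional form "`(F f, F g)` is a
limit of `(f y, g y)` with `y ∈ B_X`", no point of it is farther from `J x` than
`sup_{y ∈ S(f, δ)} ‖x - y‖`. Conversely, a slice of `B_{X**}` given by `Φ` contains the
isometric image of a slice of `B_X` given by the normalized restriction `Φ ∘ J`. So each of the
two sets of radii whose infima are the Δ-constants minorizes the other.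
-/

open NormedSpace

theorem norm_inclusionInDoubleDual (x : X) : ‖inclusionInDoubleDual ℝ X x‖ = ‖x‖ :=
  (inclusionInDoubleDualLi ℝ).norm_map x

theorem ContinuousLinearMap.norm_le_of_forall_closedBall_apply_le {f : StrongDual ℝ X} {c : ℝ}
    (h : ∀ y ∈ closedBall (0 : X) 1, f y ≤ c) : ‖f‖ ≤ c := by
  have hc : 0 ≤ c := by simpa using h 0 (mem_closedBall_self zero_le_one)
  refine f.opNorm_le_of_unit_norm hc fun z hz => abs_le.mpr ⟨?_, h z (by simp [hz])⟩
  have := h (-z) (by simp [hz])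
  rw [map_neg] at this
  linarith

theorem apply_pair_mem_closure_image_closedBall (f g : StrongDual ℝ X)
    {F : StrongDual ℝ (StrongDual ℝ X)} (hF : ‖F‖ ≤ 1) :
    (F f, F g) ∈ closure (f.prod g '' closedBall (0 : X) 1) := by
  by_contra hnot
  have hconv : Convex ℝ (closure (f.prod g '' closedBall (0 : X) 1)) :=
    ((convex_closedBall 0 1).linear_image (f.prod g).toLinearMap).closure
  obtain ⟨φ, u, hlt, hgt⟩ := geometric_hahn_banach_closed_point hconv isClosed_closure hnot
  set a := φ (1, 0)
  set b := φ (0, 1)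
  have hφ (p : ℝ × ℝ) : φ p = a * p.1 + b * p.2 := by
    conv_lhs => rw [show p = p.1 • ((1 : ℝ), (0 : ℝ)) + p.2 • ((0 : ℝ), (1 : ℝ)) by ext <;> simp]
    rw [map_add, map_smul, map_smul, smul_eq_mul, smul_eq_mul, mul_comm, mul_comm p.2]
  set h : StrongDual ℝ X := a • f + b • g
  have hh (y : X) : h y = φ (f.prod g y) := by simp [h, hφ]
  have hFh : F h = φ (F f, F g) := by simp [h, hφ]
  have hnorm : ‖h‖ ≤ u := ContinuousLinearMap.norm_le_of_forall_closedBall_apply_le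
    fun y hy => (hh y ▸ hlt _ (subset_closure (mem_image_of_mem _ hy))).le
  have hFh_le : F h ≤ u :=
    calc F h ≤ ‖F‖ * ‖h‖ := (le_abs_self _).trans (F.le_opNorm h)
      _ ≤ 1 * u := mul_le_mul hF hnorm (norm_nonneg _) zero_le_one
      _ = u := one_mul u
  linarith

theorem bddAbove_norm_sub_image_unitBallSlice (x : X) (f : StrongDual ℝ X) (δ : ℝ) :
    BddAbove ((fun y => ‖x - y‖) '' unitBallSlice f δ) := by
  refine ⟨‖x‖ + 1, ?_⟩
  rintro _ ⟨y, hy, rfl⟩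
  exact (norm_sub_le x y).trans (by linarith [hy.1])

theorem sSup_norm_sub_image_le_of_mapsTo {Y : Type*} [NormedAddCommGroup Y] [NormedSpace ℝ Y]
    {T : X →L[ℝ] Y} (hT_norm : ∀ y, ‖T y‖ = ‖y‖) (x : X) {S : Set X} (hS : S.Nonempty)
    {Φ : StrongDual ℝ Y} {δ : ℝ} (hT : MapsTo T S (unitBallSlice Φ δ)) :
    sSup ((fun y => ‖x - y‖) '' S) ≤ sSup ((fun z => ‖T x - z‖) '' unitBallSlice Φ δ) := by
  refine csSup_le_csSup (bddAbove_norm_sub_image_unitBallSlice _ _ _) (hS.image _) ?_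
  rintro _ ⟨y, hy, rfl⟩
  exact ⟨T y, hT hy, by simp only [← map_sub, hT_norm]⟩

theorem exists_unitBallSlice_subset [Nontrivial X] (f : StrongDual ℝ X) {x : X} (hx : ‖x‖ ≤ 1)
    {δ : ℝ} (hfx : 1 - δ < f x) :
    ∃ (g : StrongDual ℝ X) (δ' : ℝ), ‖g‖ = 1 ∧ 0 < δ' ∧ x ∈ unitBallSlice g δ' ∧
      unitBallSlice g δ' ⊆ unitBallSlice f δ := by
  rcases eq_or_ne f 0 with rfl | hf
  · obtain ⟨g, hg, hgx⟩ := exists_dual_vector' ℝ x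
    have hgx_nonneg : 0 ≤ g x := by rw [hgx, RCLike.ofReal_real_eq_id, id]; exact norm_nonneg x
    exact ⟨g, 2, hg, two_pos, ⟨hx, by linarith⟩, fun y hy => ⟨hy.1, hfx⟩⟩
  have hn : 0 < ‖f‖ := norm_pos_iff.mpr hf
  have hfx_le : f x ≤ ‖f‖ := (le_abs_self _).trans ((f.le_opNorm x).trans (by nlinarith))
  have hslice (y : X) : 1 - (1 - (1 - δ) / ‖f‖) < (‖f‖⁻¹ • f) y ↔ 1 - δ < f y := by
    rw [sub_sub_cancel, smul_apply, smul_eq_mul, div_eq_inv_mul,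
      mul_lt_mul_iff_of_pos_left (inv_pos.mpr hn)]
  refine ⟨‖f‖⁻¹ • f, 1 - (1 - δ) / ‖f‖, ?_, ?_, ⟨hx, (hslice x).mpr hfx⟩,
    fun y hy => ⟨hy.1, (hslice y).mp hy.2⟩⟩
  · rw [norm_smul, norm_inv, norm_norm, inv_mul_cancel₀ hn.ne']
  · linarith [(div_lt_one hn).mpr (hfx.trans_le hfx_le)]

theorem apply_sub_le_sSup_of_mem_bidualSlice (x : X) {f g : StrongDual ℝ X} (hg : ‖g‖ ≤ 1)
    {δ : ℝ} {F : StrongDual ℝ (StrongDual ℝ X)}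
    (hF : F ∈ unitBallSlice (inclusionInDoubleDual ℝ (StrongDual ℝ X) f) δ) :
    g x - F g ≤ sSup ((fun y => ‖x - y‖) '' unitBallSlice f δ) := by
  have hFf : 1 - δ < F f := hF.2
  refine le_of_forall_pos_le_add fun ε hε => ?_
  have hε' : 0 < min ε (F f - (1 - δ)) := lt_min hε (by linarith)
  obtain ⟨_, ⟨y, hy, rfl⟩, hdist⟩ :=
    Metric.mem_closure_iff.mp (apply_pair_mem_closure_image_closedBall f g hF.1) _ hε'
  rw [Prod.dist_eq, max_lt_iff, Real.dist_eq, Real.dist_eq] at hdist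
  simp only [ContinuousLinearMap.prod_apply] at hdist
  have hyS : y ∈ unitBallSlice f δ :=
    ⟨by simpa using hy, by linarith [le_abs_self (F f - f y), min_le_right ε (F f - (1 - δ))]⟩
  have hgxy : g x - g y ≤ ‖x - y‖ := by
    simpa [← map_sub] using (le_abs_self _).trans (g.le_of_opNorm_le hg (x - y))
  have hyM := le_csSup (bddAbove_norm_sub_image_unitBallSlice x f δ) (mem_image_of_mem _ hyS)
  linarith [neg_abs_le (F g - g y), min_le_left ε (F f - (1 - δ))]

theorem sSup_norm_sub_image_bidualSlice_le (x : X) (f : StrongDual ℝ X) (δ : ℝ) :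
    sSup ((fun F => ‖inclusionInDoubleDual ℝ X x - F‖) ''
        unitBallSlice (inclusionInDoubleDual ℝ (StrongDual ℝ X) f) δ)
      ≤ sSup ((fun y => ‖x - y‖) '' unitBallSlice f δ) := by
  refine Real.sSup_le ?_ (Real.sSup_nonneg (by rintro _ ⟨y, -, rfl⟩; exact norm_nonneg _))
  rintro _ ⟨F, hF, rfl⟩
  exact ContinuousLinearMap.norm_le_of_forall_closedBall_apply_le fun g hg =>
    apply_sub_le_sSup_of_mem_bidualSlice x (by simpa using hg) hF

theorem deltaConstant_bidual_general (x : X) (hx : ‖x‖ ≤ 1) :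
    DeltaC x = DeltaC (NormedSpace.inclusionInDoubleDual ℝ X x) := by
  apply csInf_eq_csInf_of_forall_exists_le
  · rintro _ ⟨f, δ, hf, hδ, hxS, rfl⟩
    refine ⟨_, ⟨inclusionInDoubleDual ℝ (StrongDual ℝ X) f, δ, ?_, hδ, ⟨?_, hxS.2⟩, rfl⟩,
      sSup_norm_sub_image_bidualSlice_le x f δ⟩
    · rwa [norm_inclusionInDoubleDual]
    · rwa [norm_inclusionInDoubleDual]
  · rintro _ ⟨Φ, δ, hΦ, hδ, hJx, rfl⟩
    have : Nontrivial X := by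
      by_contra hX
      rw [not_nontrivial_iff_subsingleton] at hX
      simp [Φ.opNorm_subsingleton] at hΦ
    obtain ⟨g, δ', hg, hδ', hxg, hsub⟩ :=
      exists_unitBallSlice_subset (Φ.comp (inclusionInDoubleDual ℝ X)) hx hJx.2
    refine ⟨_, ⟨g, δ', hg, hδ', hxg, rfl⟩,
      sSup_norm_sub_image_le_of_mapsTo norm_inclusionInDoubleDual x ⟨x, hxg⟩ ?_⟩
    exact fun y hy => ⟨(norm_inclusionInDoubleDual y).symm ▸ hy.1, (hsub hy).2⟩

/-- The Δ-constant of `x ∈ B_X` computed in `X` equals the Δ-constant of its image in the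
bidual `X**` under the canonical isometric embedding. -/
theorem deltaConstant_bidual [CompleteSpace X] (x : X) (hx : ‖x‖ ≤ 1) :
    DeltaC x = DeltaC (NormedSpace.inclusionInDoubleDual ℝ X x) :=
  deltaConstant_bidual_general x hx
end
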